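/- arXiv:1504.05387 — 7 statements merged into one kernel-verified Lean document; each statement's English description precedes it below -/
import Mathlib

section
/- Let G be a finite group, ν a probability measure on G, and Σ = {s ∈ G : ν(s) > 0} its support. The random walk driven by ν is ergodic — i.e., there exists n₀ ≥ 1 such that ν^{⋆n₀}(g) > 0 for every g ∈ G — if and only if Σ is not contained in any proper subgroup K of G and Σ is not contained in any right coset Hx of any proper normal subgroup H of G. -/
open Finset

/-- Convolution of two real-valued functions on a finite group:
`(conv μ ν) s = ∑ t, μ (s * t⁻¹) * ν t`. -/
noncomputable def conv {G : Type*} [Group G] [Fintype G] (μ ν : G → ℝ) : G → ℝ :=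
  fun s => ∑ t, μ (s * t⁻¹) * ν t

/-- Convolution powers: `convPow ν 0 = δ_e`, `convPow ν (k+1) = conv ν (convPow ν k)`. -/
noncomputable def convPow {G : Type*} [Group G] [Fintype G] [DecidableEq G]
    (ν : G → ℝ) : ℕ → G → ℝ
  | 0 => fun s => if s = 1 then 1 else 0
  | k + 1 => conv ν (convPow ν k)

/-- Total variation distance. -/
noncomputable def tv {G : Type*} [Fintype G] (μ ν : G → ℝ) : ℝ :=
  (1 / 2) * ∑ s, |μ s - ν s|

/-- A probability measure on a finite set: nonnegative and summing to 1. -/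
def IsProb {G : Type*} [Fintype G] (ν : G → ℝ) : Prop :=
  (∀ s, 0 ≤ ν s) ∧ ∑ s, ν s = 1

/-- The uniform (random) distribution on a finite type. -/
noncomputable def unif (G : Type*) [Fintype G] : G → ℝ :=
  fun _ => 1 / (Fintype.card G : ℝ)

section Aux

variable {G : Type*} [Group G]

/-- `prodOf S n g` : `g` is a product of `n` elements of `S`. -/
def prodOf (S : Set G) : ℕ → G → Prop
  | 0 => fun g => g = 1
  | n + 1 => fun g => ∃ t, g * t⁻¹ ∈ S ∧ prodOf S n t

lemma prodOf_zero {S : Set G} : prodOf S 0 (1 : G) := by simp [prodOf]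

lemma prodOf_single {S : Set G} {s : G} (hs : s ∈ S) : prodOf S 1 s :=
  ⟨1, by simpa using hs, by simp [prodOf]⟩

lemma prodOf_mul {S : Set G} :
    ∀ (a : ℕ) (g : G) (b : ℕ) (h : G),
      prodOf S a g → prodOf S b h → prodOf S (a + b) (g * h) := by
  intro a
  induction a with
  | zero =>
      intro g b h hg hh
      have hg' : g = 1 := hg
      subst hg'
      simpa using hh
  | succ n ih =>
      intro g b h hg hh
      obtain ⟨t, ht1, ht2⟩ := hg
      have harith : n + 1 + b = (n + b) + 1 := by omega
      rw [harith]
      refine ⟨t * h, ?_, ih t b h ht2 hh⟩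
      have hgt : g * h * (t * h)⁻¹ = g * t⁻¹ := by group
      rw [hgt]; exact ht1

lemma prodOf_pow {S : Set G} {a : ℕ} {g : G} (hg : prodOf S a g) :
    ∀ k : ℕ, prodOf S (k * a) (g ^ k) := by
  intro k
  induction k with
  | zero => simp [prodOf]
  | succ k ih =>
      have h2 : (k + 1) * a = k * a + a := by ring
      rw [h2, pow_succ]
      exact prodOf_mul (k * a) (g ^ k) a g ih hg

lemma prodOf_inv [Finite G] {S : Set G} {a : ℕ} {g : G} (hg : prodOf S a g) :
    ∃ b, prodOf S b g⁻¹ := by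
  refine ⟨(orderOf g - 1) * a, ?_⟩
  have hpos : 1 ≤ orderOf g := (orderOf_pos g)
  have h1 : g ^ (orderOf g - 1) = g⁻¹ := by
    have hm : g * g ^ (orderOf g - 1) = 1 := by
      rw [← pow_succ', Nat.sub_add_cancel hpos]
      exact pow_orderOf_eq_one g
    exact (inv_eq_of_mul_eq_one_right hm).symm
  rw [← h1]
  exact prodOf_pow hg _

lemma prodOf_one_rep {S : Set G} {n : ℕ} (h1 : prodOf S n 1) (h2 : prodOf S (n + 1) 1) :
    ∀ m : ℕ, prodOf S (n * n + m) (1 : G) := by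
  rcases Nat.eq_zero_or_pos n with hn | hn
  · subst hn
    intro m
    simp only [Nat.zero_mul, Nat.zero_add]
    induction m with
    | zero => exact prodOf_zero
    | succ k ih => simpa using prodOf_mul k 1 1 1 ih (by simpa using h2)
  · intro m
    have hr : m % n < n := Nat.mod_lt _ hn
    have hm : n * (m / n) + m % n = m := Nat.div_add_mod m n
    set q := m / n with hq
    set r := m % n with hrr
    have hle : r ≤ n + q := le_trans hr.le (Nat.le_add_right n q)
    have key : (n + q - r) * n + r * (n + 1) = n * n + m := by
      zify [hle]
      have hm' : (n : ℤ) * q + r = m := by exact_mod_cast hm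
      linear_combination hm'
    rw [← key]
    have p1 : prodOf S ((n + q - r) * n) (1 : G) := by
      simpa using prodOf_pow h1 (n + q - r)
    have p2 : prodOf S (r * (n + 1)) (1 : G) := by
      simpa using prodOf_pow h2 r
    simpa using prodOf_mul _ _ _ _ p1 p2

lemma convPow_nonneg [Fintype G] [DecidableEq G] {ν : G → ℝ} (h : ∀ s, 0 ≤ ν s) :
    ∀ (n : ℕ) (g : G), 0 ≤ convPow ν n g := by
  intro n
  induction n with
  | zero =>
      intro g
      simp only [convPow]
      split <;> norm_num
  | succ n ih =>
      intro g
      simp only [convPow, conv]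
      exact Finset.sum_nonneg fun t _ => mul_nonneg (h _) (ih _)

lemma convPow_pos_iff [Fintype G] [DecidableEq G] {ν : G → ℝ} (h : ∀ s, 0 ≤ ν s) :
    ∀ (n : ℕ) (g : G), 0 < convPow ν n g ↔ prodOf {s | 0 < ν s} n g := by
  intro n
  induction n with
  | zero =>
      intro g
      simp only [convPow, prodOf]
      split <;> simp_all
  | succ n ih =>
      intro g
      have hdef : convPow ν (n + 1) g = ∑ t, ν (g * t⁻¹) * convPow ν n t := by
        simp [convPow, conv]
      constructor
      · intro hpos
        by_contra hcon
        simp only [prodOf] at hcon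
        push_neg at hcon
        have hz : convPow ν (n + 1) g = 0 := by
          rw [hdef]
          apply Finset.sum_eq_zero
          intro t _
          rcases eq_or_lt_of_le (h (g * t⁻¹)) with he | hl
          · rw [← he, zero_mul]
          · have hnp : ¬ 0 < convPow ν n t := by
              rw [ih t]; exact hcon t hl
            have hzz : convPow ν n t = 0 :=
              le_antisymm (not_lt.mp hnp) (convPow_nonneg h n t)
            rw [hzz, mul_zero]
        rw [hz] at hpos; exact lt_irrefl 0 hpos
      · rintro ⟨t, ht1, ht2⟩
        rw [hdef]
        exact Finset.sum_pos' (fun i _ => mul_nonneg (h _) (convPow_nonneg h n i))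
          ⟨t, Finset.mem_univ t, mul_pos ht1 ((ih t).mpr ht2)⟩

end Aux

/-- Ergodic theorem for random walks on groups. -/
theorem ergodic_iff_support_not_in_subgroup_or_coset
    {G : Type*} [Group G] [Fintype G] [DecidableEq G]
    (ν : G → ℝ) (hν : IsProb ν) :
    (∃ n₀ : ℕ, 1 ≤ n₀ ∧ ∀ g : G, 0 < convPow ν n₀ g) ↔
      ((∀ K : Subgroup G, K ≠ ⊤ → ¬ {s : G | 0 < ν s} ⊆ (K : Set G)) ∧
       (∀ H : Subgroup G, H.Normal → H ≠ ⊤ → ∀ x : G,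
          ¬ {s : G | 0 < ν s} ⊆ (fun h => h * x) '' (H : Set G))) := by
  obtain ⟨hnn, hsum⟩ := hν
  set S : Set G := {s : G | 0 < ν s} with hSdef
  constructor
  · rintro ⟨n₀, hn₀, hpos⟩
    have hprod : ∀ g : G, prodOf S n₀ g := fun g => (convPow_pos_iff hnn n₀ g).mp (hpos g)
    constructor
    · intro K hK hsub
      apply hK
      rw [Subgroup.eq_top_iff']
      intro g
      have key : ∀ (n : ℕ) (g : G), prodOf S n g → g ∈ K := by
        intro n
        induction n with
        | zero => intro g hg; rw [show g = 1 from hg]; exact K.one_mem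
        | succ n ih =>
            rintro g ⟨t, ht1, ht2⟩
            have hgt : g = (g * t⁻¹) * t := by group
            rw [hgt]
            exact K.mul_mem (hsub ht1) (ih t ht2)
      exact key n₀ g (hprod g)
    · intro H hHnorm hHne x hsub
      apply hHne
      rw [Subgroup.eq_top_iff']
      have key : ∀ (n : ℕ) (g : G), prodOf S n g → g * (x ^ n)⁻¹ ∈ H := by
        intro n
        induction n with
        | zero => intro g hg; rw [show g = 1 from hg]; simpa using H.one_mem
        | succ n ih =>
            rintro g ⟨t, ht1, ht2⟩
            have hs : (g * t⁻¹) * x⁻¹ ∈ H := by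
              obtain ⟨h, hh, hhx⟩ := hsub ht1
              rw [← hhx]
              simpa using hh
            have hconj : x * (t * (x ^ n)⁻¹) * x⁻¹ ∈ H := hHnorm.conj_mem _ (ih t ht2) x
            have heq : g * (x ^ (n + 1))⁻¹ =
                ((g * t⁻¹) * x⁻¹) * (x * (t * (x ^ n)⁻¹) * x⁻¹) := by
              rw [pow_succ]
              group
            rw [heq]
            exact H.mul_mem hs hconj
      intro h
      have hh := key n₀ (h * x ^ n₀) (hprod _)
      simpa using hh
  · rintro ⟨h1, h2⟩
    -- the support is nonempty
    have hSne : S.Nonempty := by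
      by_contra hcon
      rw [Set.not_nonempty_iff_eq_empty] at hcon
      have hz : ∀ s : G, ν s = 0 := by
        intro s
        rcases eq_or_lt_of_le (hnn s) with he | hl
        · exact he.symm
        · exact absurd (show s ∈ S from hl) (by simp [hcon])
      rw [Finset.sum_congr rfl (fun s _ => hz s)] at hsum
      simp at hsum
    obtain ⟨s₀, hs₀⟩ := hSne
    -- Step 1: every element of G is a product of elements of S
    have H0 : ∀ g : G, ∃ n, prodOf S n g := by
      let K : Subgroup G :=
        { carrier := {g | ∃ n, prodOf S n g}
          one_mem' := ⟨0, prodOf_zero⟩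
          mul_mem' := by
            intro a b ha hb
            obtain ⟨m, hm⟩ := ha
            obtain ⟨n, hn⟩ := hb
            exact ⟨m + n, prodOf_mul m a n b hm hn⟩
          inv_mem' := by
            intro a ha
            obtain ⟨m, hm⟩ := ha
            exact prodOf_inv hm }
      have hKtop : K = ⊤ := by
        by_contra hne
        exact h1 K hne (fun s hs => ⟨1, prodOf_single hs⟩)
      intro g
      have hg : g ∈ K := hKtop ▸ Subgroup.mem_top g
      exact hg
    -- Step 2: the "period-zero" normal subgroup
    let Hc : Subgroup G :=
      { carrier := {g | ∃ a m, prodOf S a g ∧ prodOf S m 1 ∧ prodOf S (m + a) 1}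
        one_mem' := ⟨0, 0, prodOf_zero, prodOf_zero, prodOf_zero⟩
        mul_mem' := by
          intro p q hp hq
          obtain ⟨a, m, ha, hm, hma⟩ := hp
          obtain ⟨b, n, hb, hn, hnb⟩ := hq
          refine ⟨a + b, m + n, prodOf_mul _ _ _ _ ha hb,
            by simpa using prodOf_mul _ _ _ _ hm hn, ?_⟩
          have hmul := prodOf_mul _ _ _ _ hma hnb
          simpa [show m + a + (n + b) = m + n + (a + b) by omega] using hmul
        inv_mem' := by
          intro p hp
          obtain ⟨a, m, ha, hm, hma⟩ := hp
          obtain ⟨c, hc⟩ := prodOf_inv ha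
          refine ⟨c, m + a, hc, hma, ?_⟩
          have hac : prodOf S (a + c) 1 := by
            simpa using prodOf_mul _ _ _ _ ha hc
          have hmul := prodOf_mul _ _ _ _ hm hac
          simpa [show m + (a + c) = m + a + c by omega] using hmul }
    have hHnorm : Hc.Normal := by
      constructor
      intro p hp c
      obtain ⟨a, m, ha, hm, hma⟩ := hp
      obtain ⟨u, hu⟩ := H0 c
      obtain ⟨v, hv⟩ := H0 c⁻¹
      have huv : prodOf S (u + v) 1 := by simpa using prodOf_mul _ _ _ _ hu hv
      refine ⟨u + a + v, m, ?_, hm, ?_⟩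
      · have hmul := prodOf_mul _ _ _ _ (prodOf_mul _ _ _ _ hu ha) hv
        simpa using hmul
      · have hmul := prodOf_mul _ _ _ _ hma huv
        simpa [show m + a + (u + v) = m + (u + a + v) by omega] using hmul
    have hsubcoset : S ⊆ (fun h => h * s₀) '' (Hc : Set G) := by
      intro s hs
      obtain ⟨c, hc⟩ := H0 s₀⁻¹
      have h1c : prodOf S (1 + c) (s * s₀⁻¹) :=
        prodOf_mul 1 s c s₀⁻¹ (prodOf_single hs) hc
      have h1c' : prodOf S (1 + c) 1 := by
        simpa using prodOf_mul 1 s₀ c s₀⁻¹ (prodOf_single hs₀) hc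
      exact ⟨s * s₀⁻¹, ⟨1 + c, 0, h1c, prodOf_zero, by simpa using h1c'⟩, by simp⟩
    have hHtop : Hc = ⊤ := by
      by_contra hne
      exact h2 Hc hHnorm hne s₀ hsubcoset
    have hs₀mem : s₀ ∈ Hc := hHtop ▸ Subgroup.mem_top s₀
    obtain ⟨a, m, ha, hm, hma⟩ := hs₀mem
    obtain ⟨c, hc⟩ := H0 s₀⁻¹
    have hac : prodOf S (a + c) 1 := by simpa using prodOf_mul _ _ _ _ ha hc
    have hn1 : prodOf S (m + a + c) 1 := by
      have hmul := prodOf_mul _ _ _ _ hm hac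
      simpa [show m + (a + c) = m + a + c by omega] using hmul
    have hn2 : prodOf S (m + a + c + 1) 1 := by
      have h1c : prodOf S (1 + c) 1 := by
        simpa using prodOf_mul 1 s₀ c s₀⁻¹ (prodOf_single hs₀) hc
      have hmul := prodOf_mul _ _ _ _ hma h1c
      simpa [show m + a + (1 + c) = m + a + c + 1 by omega] using hmul
    -- Step 3/4: assemble a uniform power
    have hcons := prodOf_one_rep hn1 hn2
    choose f hf using H0
    obtain ⟨Q, hQ⟩ : ∃ Q, (m + a + c) * (m + a + c) = Q := ⟨_, rfl⟩
    rw [hQ] at hcons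
    set B := m + a + c with hB
    set N₀ := Finset.univ.sup f with hN₀
    refine ⟨Q + (B + 1 + N₀), by omega, ?_⟩
    intro g
    rw [convPow_pos_iff hnn]
    have hfg : f g ≤ N₀ := Finset.le_sup (Finset.mem_univ g)
    have hmul := prodOf_mul (f g) g (Q + (B + 1 + N₀ - f g)) 1 (hf g)
      (hcons (B + 1 + N₀ - f g))
    simpa [show f g + (Q + (B + 1 + N₀ - f g)) = Q + (B + 1 + N₀) by omega] using hmul
end

section
/- Let G be a finite group and Σ a nonempty subset of G that generates G. If Σ is not contained in any right coset Hx of any proper normal subgroup H of G, then the greatest common divisor of the set of lengths n ≥ 1 of words σ_{i_1} σ_{i_2} ⋯ σ_{i_n} with every letter σ_{i_j} ∈ Σ and product equal to the identity e is 1. -/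
open Finset

/-- If a nonempty generating set `Σ` of a finite group is not contained in
any right coset of any proper normal subgroup, then the gcd of the lengths of
`Σ`-presentations of the identity is 1, i.e. every common divisor of the set of such
lengths equals 1. -/
theorem gcd_of_identity_presentation_lengths_eq_one
    {G : Type*} [Group G] [Fintype G]
    (S : Set G) (hne : S.Nonempty) (hgen : Subgroup.closure S = ⊤)
    (hcoset : ∀ H : Subgroup G, H.Normal → H ≠ ⊤ → ∀ x : G,
        ¬ S ⊆ (fun h => h * x) '' (H : Set G))
    (d : ℕ)
    (hd : ∀ l : List G, (∀ y ∈ l, y ∈ S) → l.prod = 1 → 1 ≤ l.length → d ∣ l.length) :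
    d = 1 := by
  obtain ⟨s₀, hs₀⟩ := hne
  -- every element of `G` is the product of a word with letters in `S`
  have word : ∀ g : G, ∃ l : List G, (∀ y ∈ l, y ∈ S) ∧ l.prod = g := by
    intro g
    have hg : g ∈ Submonoid.closure S := by
      have hg' : g ∈ Subgroup.closure S := by rw [hgen]; trivial
      refine Subgroup.closure_induction (fun x hx => Submonoid.subset_closure hx)
        (Submonoid.one_mem _) (fun x y _ _ hx hy => Submonoid.mul_mem _ hx hy)
        (fun x _ hx => ?_) hg'
      have h1 : x ^ (orderOf x - 1) * x = 1 := by
        rw [← pow_succ, Nat.sub_add_cancel (orderOf_pos x), pow_orderOf_eq_one]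
      rw [inv_eq_of_mul_eq_one_left h1]
      exact pow_mem hx _
    obtain ⟨l, hl, hlp⟩ := Submonoid.exists_list_of_mem_closure hg
    exact ⟨l, hl, hlp⟩
  -- a word for `s₀⁻¹`
  obtain ⟨m₀, hm₀, hm₀p⟩ := word s₀⁻¹
  -- any two words with the same product have congruent lengths mod d
  have cong : ∀ l₁ l₂ : List G, (∀ y ∈ l₁, y ∈ S) → (∀ y ∈ l₂, y ∈ S) →
      l₁.prod = l₂.prod → ((l₁.length : ZMod d) = (l₂.length : ZMod d)) := by
    intro l₁ l₂ h₁ h₂ hp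
    obtain ⟨m, hm, hmp⟩ := word (l₁.prod)⁻¹
    have key : ∀ l : List G, (∀ y ∈ l, y ∈ S) → l.prod = l₁.prod →
        d ∣ l.length + m.length + (m₀.length + 1) := by
      intro l hl hlp
      have := hd (l ++ m ++ (s₀ :: m₀)) (by
          intro y hy
          simp only [List.mem_append, List.mem_cons] at hy
          rcases hy with (hy | hy) | (rfl | hy)
          · exact hl y hy
          · exact hm y hy
          · exact hs₀
          · exact hm₀ y hy)
        (by simp [List.prod_append, hlp, hmp, hm₀p])
        (by simp; omega)
      simpa [List.length_append, add_assoc, add_comm, add_left_comm] using this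
    have k₁ := key l₁ h₁ rfl
    have k₂ := key l₂ h₂ hp.symm
    have c₁ : ((l₁.length + m.length + (m₀.length + 1) : ℕ) : ZMod d) = 0 :=
      (ZMod.natCast_eq_zero_iff _ _).2 k₁
    have c₂ : ((l₂.length + m.length + (m₀.length + 1) : ℕ) : ZMod d) = 0 :=
      (ZMod.natCast_eq_zero_iff _ _).2 k₂
    push_cast at c₁ c₂
    linear_combination c₁ - c₂
  -- the subgroup of elements with a word of length ≡ 0 mod d
  set H : Subgroup G :=
    { carrier := {g | ∃ l : List G, (∀ y ∈ l, y ∈ S) ∧ l.prod = g ∧ (l.length : ZMod d) = 0}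
      one_mem' := ⟨[], by simp, by simp, by simp⟩
      mul_mem' := by
        rintro a b ⟨la, hla, hlap, hla0⟩ ⟨lb, hlb, hlbp, hlb0⟩
        refine ⟨la ++ lb, ?_, by simp [hlap, hlbp], by simp [hla0, hlb0]⟩
        intro y hy
        rcases List.mem_append.1 hy with hy | hy
        · exact hla y hy
        · exact hlb y hy
      inv_mem' := by
        rintro a ⟨la, hla, hlap, hla0⟩
        obtain ⟨m, hm, hmp⟩ := word a⁻¹
        refine ⟨m, hm, hmp, ?_⟩
        have : (((la ++ m).length : ℕ) : ZMod d) = (([] : List G).length : ZMod d) := by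
          refine cong _ _ ?_ (by simp) (by simp [hlap, hmp])
          intro y hy
          rcases List.mem_append.1 hy with hy | hy
          · exact hla y hy
          · exact hm y hy
        simp only [List.length_append, List.length_nil, Nat.cast_add, Nat.cast_zero] at this
        rw [hla0, zero_add] at this
        exact this } with hH
  have hHnorm : H.Normal := by
    constructor
    rintro g ⟨lg, hlg, hlgp, hlg0⟩ x
    obtain ⟨a, ha, hap⟩ := word x
    obtain ⟨b, hb, hbp⟩ := word x⁻¹
    have hab : ((a ++ b).length : ZMod d) = (([] : List G).length : ZMod d) := by
      refine cong _ _ ?_ (by simp) (by simp [hap, hbp])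
      intro y hy
      rcases List.mem_append.1 hy with hy | hy
      · exact ha y hy
      · exact hb y hy
    simp only [List.length_append, List.length_nil, Nat.cast_add, Nat.cast_zero] at hab
    refine ⟨a ++ lg ++ b, ?_, by simp [hap, hlgp, hbp, mul_assoc], ?_⟩
    · intro y hy
      simp only [List.mem_append] at hy
      rcases hy with (hy | hy) | hy
      · exact ha y hy
      · exact hlg y hy
      · exact hb y hy
    · push_cast [List.length_append]
      rw [show ((a.length : ZMod d) + lg.length + b.length)
          = ((a.length : ZMod d) + b.length) + lg.length by ring, hab, hlg0, add_zero]
  -- S is contained in the coset H * s₀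
  have hlen0 : ((m₀.length + 1 : ℕ) : ZMod d) = 0 := by
    have hc : (((s₀ :: m₀).length : ℕ) : ZMod d) = (([] : List G).length : ZMod d) := by
      refine cong _ _ ?_ (by simp) (by simp [hm₀p])
      intro y hy
      rcases List.mem_cons.1 hy with rfl | hy
      · exact hs₀
      · exact hm₀ y hy
    simpa [add_comm] using hc
  have hsub : S ⊆ (fun h => h * s₀) '' (H : Set G) := by
    intro s hs
    refine ⟨s * s₀⁻¹, ⟨s :: m₀, ?_, by simp [hm₀p], ?_⟩, by group⟩
    · intro y hy
      rcases List.mem_cons.1 hy with rfl | hy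
      · exact hs
      · exact hm₀ y hy
    · simpa [add_comm] using hlen0
  by_contra hd1
  have hs₀H : s₀ ∉ H := by
    rintro ⟨l, hl, hlp, hl0⟩
    have hc : (([s₀] : List G).length : ZMod d) = (l.length : ZMod d) := by
      refine cong _ _ ?_ hl (by simp [hlp])
      intro y hy
      rcases List.mem_cons.1 hy with rfl | hy
      · exact hs₀
      · simp at hy
    rw [hl0] at hc
    have : d ∣ 1 := (ZMod.natCast_eq_zero_iff 1 d).1 (by simpa using hc)
    exact hd1 (Nat.dvd_one.1 this)
  have hHne : H ≠ ⊤ := fun h => hs₀H (h ▸ Subgroup.mem_top s₀)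
  exact hcoset H hHnorm hHne s₀ hsub
end

section
/- Let G be a finite group and ν a symmetric probability measure on G. Suppose (v_t)_{t∈G} is a family of functions v_t : G → ℝ and (λ_t)_{t∈G} real numbers such that: v_1 is the constant function 1 and λ_1 = 1 (where 1 denotes the identity of G); for all t, g ∈ G, ∑_{h∈G} ν(h g⁻¹) v_t(h) = λ_t v_t(g); and (1/|G|) ∑_{g∈G} v_s(g) v_t(g) = 1 if s = t and 0 otherwise. Then for every k ∈ ℕ, the squared total variation distance satisfies ‖ν^{⋆k} − π‖² ≤ (1/4) ∑_{t≠1} v_t(e)² λ_t^{2k}. -/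
open Finset

/-- Upper Bound Lemma (spectral form) for the squared variation distance. -/
theorem sq_tv_le_spectral_sum
    {G : Type*} [Group G] [Fintype G] [DecidableEq G]
    (ν : G → ℝ) (hν : IsProb ν) (hsym : ∀ s : G, ν s = ν s⁻¹)
    (v : G → G → ℝ) (lam : G → ℝ)
    (hv1 : v 1 = fun _ => (1 : ℝ)) (hlam1 : lam 1 = 1)
    (heig : ∀ t g : G, ∑ h : G, ν (h * g⁻¹) * v t h = lam t * v t g)
    (horth : ∀ s t : G,
        (1 / (Fintype.card G : ℝ)) * ∑ g : G, v s g * v t g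
          = if s = t then 1 else 0)
    (k : ℕ) :
    tv (convPow ν k) (unif G) ^ 2
      ≤ (1 / 4) * ∑ t ∈ Finset.univ.erase (1 : G), v t 1 ^ 2 * lam t ^ (2 * k) := by
  classical
  set n : ℝ := (Fintype.card G : ℝ) with hn
  have hnpos : 0 < n := by
    have h : 0 < Fintype.card G := Fintype.card_pos
    simp only [hn]
    exact_mod_cast h
  have hnne : n ≠ 0 := ne_of_gt hnpos
  -- orthogonality without the 1/n factor
  have horth' : ∀ s t : G, ∑ g : G, v s g * v t g = if s = t then n else 0 := by
    intro s t
    have h := horth s t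
    have h2 : ∑ g : G, v s g * v t g = n * ((1/n) * ∑ g : G, v s g * v t g) := by
      field_simp
    rw [h2, h]
    split <;> simp
  -- dual orthogonality via matrices
  have dual : ∀ g h : G, ∑ t : G, v t g * v t h = if g = h then n else 0 := by
    intro g h
    set M : Matrix G G ℝ := Matrix.of (fun t g => v t g) with hM
    have h1 : M * ((1/n) • M.transpose) = 1 := by
      ext s t
      simp only [Matrix.mul_apply, Matrix.smul_apply, Matrix.transpose_apply, hM,
        Matrix.of_apply, Matrix.one_apply, smul_eq_mul]
      rw [show ∑ g : G, v s g * ((1/n) * v t g) = (1/n) * ∑ g : G, v s g * v t g by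
        rw [Finset.mul_sum]; exact Finset.sum_congr rfl fun g _ => by ring]
      exact horth s t
    have h2 := mul_eq_one_comm.mp h1
    have h3 := congrFun (congrFun h2 g) h
    simp only [Matrix.mul_apply, Matrix.smul_apply, Matrix.transpose_apply, hM,
      Matrix.of_apply, Matrix.one_apply, smul_eq_mul] at h3
    have h4 : (1/n) * ∑ t : G, v t g * v t h = if g = h then 1 else 0 := by
      rw [Finset.mul_sum, ← h3]
      exact Finset.sum_congr rfl fun t _ => by ring
    have h5 : ∑ t : G, v t g * v t h = n * ((1/n) * ∑ t : G, v t g * v t h) := by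
      field_simp
    rw [h5, h4]
    split <;> simp
  -- eigenrelation for powers
  have pow_eig : ∀ t : G, ∀ m : ℕ, ∑ h : G, convPow ν m h * v t h = lam t ^ m * v t 1 := by
    intro t m
    induction m with
    | zero => simp [convPow]
    | succ m ih =>
      calc ∑ h : G, convPow ν (m+1) h * v t h
          = ∑ h : G, ∑ s : G, convPow ν m s * (ν (h * s⁻¹) * v t h) := by
            refine Finset.sum_congr rfl fun h _ => ?_
            show (∑ s : G, ν (h * s⁻¹) * convPow ν m s) * v t h = _
            rw [Finset.sum_mul]
            exact Finset.sum_congr rfl fun s _ => by ring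
        _ = ∑ s : G, ∑ h : G, convPow ν m s * (ν (h * s⁻¹) * v t h) := Finset.sum_comm
        _ = ∑ s : G, convPow ν m s * (lam t * v t s) := by
            refine Finset.sum_congr rfl fun s _ => ?_
            rw [← Finset.mul_sum, heig t s]
        _ = lam t * ∑ s : G, convPow ν m s * v t s := by
            rw [Finset.mul_sum]; exact Finset.sum_congr rfl fun s _ => by ring
        _ = lam t ^ (m+1) * v t 1 := by rw [ih]; ring
  set c : G → ℝ := fun t => lam t ^ k * v t 1 with hc
  -- expansion of convPow ν k - unif
  have expand : ∀ g : G, convPow ν k g - unif G g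
      = (1/n) * ∑ t ∈ Finset.univ.erase (1 : G), c t * v t g := by
    intro g
    have key : ∑ t : G, c t * v t g = n * convPow ν k g := by
      calc ∑ t : G, c t * v t g
          = ∑ t : G, ∑ h : G, convPow ν k h * (v t h * v t g) := by
            refine Finset.sum_congr rfl fun t _ => ?_
            rw [show c t = ∑ h : G, convPow ν k h * v t h from (pow_eig t k).symm ▸ rfl,
              Finset.sum_mul]
            exact Finset.sum_congr rfl fun h _ => by ring
        _ = ∑ h : G, ∑ t : G, convPow ν k h * (v t h * v t g) := Finset.sum_comm
        _ = ∑ h : G, convPow ν k h * (if h = g then n else 0) := by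
            refine Finset.sum_congr rfl fun h _ => ?_
            rw [← Finset.mul_sum, dual h g]
        _ = n * convPow ν k g := by
            simp [Finset.sum_ite_eq', mul_comm]
    have hc1 : c 1 * v 1 g = 1 := by
      simp [hc, hlam1, hv1]
    have hsplit : ∑ t : G, c t * v t g
        = c 1 * v 1 g + ∑ t ∈ Finset.univ.erase (1 : G), c t * v t g := by
      rw [← Finset.add_sum_erase _ _ (Finset.mem_univ (1 : G))]
    have h6 : ∑ t ∈ Finset.univ.erase (1 : G), c t * v t g = n * convPow ν k g - 1 := by
      rw [← key, hsplit, hc1]; ring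
    rw [h6]
    simp only [unif, ← hn]
    field_simp
  -- Parseval
  have parseval : ∑ g : G, (convPow ν k g - unif G g)^2
      = (1/n) * ∑ t ∈ Finset.univ.erase (1 : G), (c t)^2 := by
    have per_g : ∀ g : G, (convPow ν k g - unif G g)^2
        = (1/n)^2 * ∑ s ∈ Finset.univ.erase (1 : G), ∑ t ∈ Finset.univ.erase (1 : G),
            c s * c t * (v s g * v t g) := by
      intro g
      rw [expand g, mul_pow]
      congr 1
      rw [pow_two, Finset.sum_mul_sum]
      exact Finset.sum_congr rfl fun s _ => Finset.sum_congr rfl fun t _ => by ring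
    calc ∑ g : G, (convPow ν k g - unif G g)^2
        = (1/n)^2 * ∑ g : G, ∑ s ∈ Finset.univ.erase (1 : G), ∑ t ∈ Finset.univ.erase (1 : G),
            c s * c t * (v s g * v t g) := by
          rw [Finset.mul_sum]; exact Finset.sum_congr rfl fun g _ => per_g g
      _ = (1/n)^2 * ∑ s ∈ Finset.univ.erase (1 : G), ∑ g : G, ∑ t ∈ Finset.univ.erase (1 : G),
            c s * c t * (v s g * v t g) := by rw [Finset.sum_comm]
      _ = (1/n)^2 * ∑ s ∈ Finset.univ.erase (1 : G), n * (c s)^2 := by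
          congr 1
          refine Finset.sum_congr rfl fun s hs => ?_
          rw [Finset.sum_comm]
          calc ∑ t ∈ Finset.univ.erase (1 : G), ∑ g : G, c s * c t * (v s g * v t g)
              = ∑ t ∈ Finset.univ.erase (1 : G), c s * c t * (if s = t then n else 0) := by
                refine Finset.sum_congr rfl fun t _ => ?_
                rw [← Finset.mul_sum, horth' s t]
            _ = n * (c s)^2 := by
                rw [Finset.sum_eq_single_of_mem s hs]
                · simp; ring
                · intro t _ hts
                  rw [if_neg (fun h => hts h.symm), mul_zero]
      _ = (1/n) * ∑ t ∈ Finset.univ.erase (1 : G), (c t)^2 := by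
          rw [Finset.mul_sum, Finset.mul_sum]
          refine Finset.sum_congr rfl fun t _ => ?_
          field_simp
  -- Cauchy–Schwarz
  have cs : (∑ g : G, |convPow ν k g - unif G g|)^2
      ≤ n * ∑ g : G, (convPow ν k g - unif G g)^2 := by
    have := Finset.sum_mul_sq_le_sq_mul_sq Finset.univ (fun _ : G => (1:ℝ))
      (fun g => |convPow ν k g - unif G g|)
    simp only [one_mul, one_pow, sq_abs] at this
    simpa [hn, Finset.sum_const, Finset.card_univ] using this
  have tv_eq : tv (convPow ν k) (unif G) = (1/2) * ∑ g : G, |convPow ν k g - unif G g| := rfl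
  rw [tv_eq, mul_pow]
  have step : (∑ g : G, |convPow ν k g - unif G g|)^2
      ≤ ∑ t ∈ Finset.univ.erase (1 : G), (c t)^2 := by
    calc (∑ g : G, |convPow ν k g - unif G g|)^2
        ≤ n * ∑ g : G, (convPow ν k g - unif G g)^2 := cs
      _ = ∑ t ∈ Finset.univ.erase (1 : G), (c t)^2 := by
          rw [parseval]; field_simp
  have hcsq : ∀ t : G, (c t)^2 = v t 1 ^ 2 * lam t ^ (2*k) := by
    intro t
    simp only [hc]
    rw [mul_pow, ← pow_mul]
    ring_nf
  calc ((1:ℝ)/2)^2 * (∑ g : G, |convPow ν k g - unif G g|)^2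
      ≤ ((1:ℝ)/2)^2 * ∑ t ∈ Finset.univ.erase (1 : G), (c t)^2 := by
        apply mul_le_mul_of_nonneg_left step (by norm_num)
    _ = (1/4) * ∑ t ∈ Finset.univ.erase (1 : G), v t 1 ^ 2 * lam t ^ (2*k) := by
        rw [Finset.sum_congr rfl fun t _ => hcsq t]; norm_num
end

section
/- Let G be a finite group and ν a symmetric probability measure on G. Suppose (v_t)_{t∈G} is a family of functions v_t : G → ℝ and (λ_t)_{t∈G} real numbers such that: v_1 is the constant function 1 and λ_1 = 1 (where 1 denotes the identity of G); for all t, g ∈ G, ∑_{h∈G} ν(h g⁻¹) v_t(h) = λ_t v_t(g); and (1/|G|) ∑_{g∈G} v_s(g) v_t(g) = 1 if s = t and 0 otherwise. If λ⋆ ≥ 0 is a real number with |λ_t| ≤ λ⋆ for all t ≠ 1, then for every k ∈ ℕ, ‖ν^{⋆k} − π‖² ≤ ((|G| − 1)/4) · λ⋆^{2k}. -/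
open Finset

/-- second-largest-eigenvalue bound on the squared variation distance. -/
theorem sq_tv_le_card_mul_lambdaStar_pow
    {G : Type*} [Group G] [Fintype G] [DecidableEq G]
    (ν : G → ℝ) (hν : IsProb ν) (hsym : ∀ s : G, ν s = ν s⁻¹)
    (v : G → G → ℝ) (lam : G → ℝ)
    (hv1 : v 1 = fun _ => (1 : ℝ)) (hlam1 : lam 1 = 1)
    (heig : ∀ t g : G, ∑ h : G, ν (h * g⁻¹) * v t h = lam t * v t g)
    (horth : ∀ s t : G,
        (1 / (Fintype.card G : ℝ)) * ∑ g : G, v s g * v t g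
          = if s = t then 1 else 0)
    (lamStar : ℝ) (hstar : 0 ≤ lamStar)
    (hbound : ∀ t : G, t ≠ 1 → |lam t| ≤ lamStar)
    (k : ℕ) :
    tv (convPow ν k) (unif G) ^ 2
      ≤ ((Fintype.card G : ℝ) - 1) / 4 * lamStar ^ (2 * k) := by

  classical
  set N : ℝ := (Fintype.card G : ℝ) with hNdef
  have hN : 0 < N := by
    rw [hNdef]
    exact_mod_cast Fintype.card_pos
  have hNne : N ≠ 0 := ne_of_gt hN
  -- non-normalized orthogonality
  have horth' : ∀ s t : G, ∑ g : G, v s g * v t g = if s = t then N else 0 := by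
    intro s t
    have h := horth s t
    rw [one_div, inv_mul_eq_iff_eq_mul₀ hNne] at h
    rw [h]
    by_cases hst : s = t <;> simp [hst]
  -- completeness via matrices
  have hcomp : ∀ g h : G, ∑ t : G, v t g * v t h = if g = h then N else 0 := by
    let A : Matrix G G ℝ := Matrix.of fun t g => v t g
    let B : Matrix G G ℝ := Matrix.of fun g t => v t g / N
    have hAB : A * B = 1 := by
      ext s t
      simp only [Matrix.mul_apply, Matrix.one_apply, A, B, Matrix.of_apply]
      rw [show (∑ g : G, v s g * (v t g / N)) = (∑ g : G, v s g * v t g) / N by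
        rw [Finset.sum_div]; exact Finset.sum_congr rfl fun g _ => by ring]
      rw [horth' s t]
      by_cases hst : s = t <;> simp [hst, hNne]
    have hBA : B * A = 1 := mul_eq_one_comm.mp hAB
    intro g h
    have h2 : (B * A) g h = (1 : Matrix G G ℝ) g h := by rw [hBA]
    simp only [Matrix.mul_apply, Matrix.one_apply, A, B, Matrix.of_apply] at h2
    have h3 : (∑ t : G, v t g * v t h) / N = if g = h then 1 else 0 := by
      rw [Finset.sum_div, ← h2]
      exact Finset.sum_congr rfl fun t _ => by ring
    rw [div_eq_iff hNne] at h3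
    rw [h3]
    by_cases hgh : g = h <;> simp [hgh]
  -- coefficients evolve by powers of eigenvalues
  have hcoeff : ∀ (m : ℕ) (t : G), ∑ g : G, convPow ν m g * v t g = lam t ^ m * v t 1 := by
    intro m
    induction m with
    | zero => intro t; simp [convPow]
    | succ m ih =>
      intro t
      have step : ∑ g : G, convPow ν (m + 1) g * v t g
          = ∑ h : G, convPow ν m h * ∑ g : G, ν (g * h⁻¹) * v t g := by
        simp only [convPow, conv]
        rw [show (∑ g : G, (∑ h : G, ν (g * h⁻¹) * convPow ν m h) * v t g)
            = ∑ g : G, ∑ h : G, convPow ν m h * (ν (g * h⁻¹) * v t g) from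
          Finset.sum_congr rfl fun g _ => by
            rw [Finset.sum_mul]; exact Finset.sum_congr rfl fun h _ => by ring]
        rw [Finset.sum_comm]
        exact Finset.sum_congr rfl fun h _ => by rw [Finset.mul_sum]
      rw [step]
      simp_rw [fun h => heig t h]
      rw [show (∑ h : G, convPow ν m h * (lam t * v t h))
          = lam t * ∑ h : G, convPow ν m h * v t h from by
        rw [Finset.mul_sum]; exact Finset.sum_congr rfl fun h _ => by ring]
      rw [ih t]
      ring
  -- reconstruction
  have hrec : ∀ g : G, convPow ν k g = ∑ t : G, lam t ^ k * v t 1 / N * v t g := by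
    intro g
    have e1 : ∑ t : G, lam t ^ k * v t 1 / N * v t g
        = ∑ t : G, (∑ h : G, convPow ν k h * v t h) / N * v t g :=
      Finset.sum_congr rfl fun t _ => by rw [hcoeff k t]
    have e2 : ∑ t : G, (∑ h : G, convPow ν k h * v t h) / N * v t g
        = ∑ t : G, ∑ h : G, convPow ν k h * (v t h * v t g) / N :=
      Finset.sum_congr rfl fun t _ => by
        rw [div_mul_eq_mul_div, Finset.sum_mul, Finset.sum_div]
        exact Finset.sum_congr rfl fun h _ => by ring
    have e3 : ∑ t : G, ∑ h : G, convPow ν k h * (v t h * v t g) / N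
        = ∑ h : G, convPow ν k h * (∑ t : G, v t h * v t g) / N := by
      rw [Finset.sum_comm]
      exact Finset.sum_congr rfl fun h _ => by
        rw [Finset.mul_sum, Finset.sum_div]
    rw [e1, e2, e3]
    have e4 : ∀ h : G, convPow ν k h * (∑ t : G, v t h * v t g) / N
        = if h = g then convPow ν k h else 0 := by
      intro h
      rw [hcomp h g]
      split_ifs with hh
      · rw [mul_div_assoc, div_self hNne, mul_one]
      · simp
    simp_rw [e4]
    rw [Finset.sum_ite_eq']
    simp
  -- deviation from uniform
  set a : G → ℝ := fun t => lam t ^ k * v t 1 / N with hadef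
  set x : G → ℝ := fun g => convPow ν k g - 1 / N with hxdef
  have hv1' : ∀ g : G, v 1 g = 1 := fun g => by rw [hv1]
  have ha1 : a 1 = 1 / N := by simp [hadef, hlam1, hv1' 1]
  have hx : ∀ g : G, x g = ∑ t ∈ Finset.univ.erase 1, a t * v t g := by
    intro g
    have := Finset.add_sum_erase Finset.univ (fun t => a t * v t g) (Finset.mem_univ (1 : G))
    have hsum : convPow ν k g = a 1 * v 1 g + ∑ t ∈ Finset.univ.erase 1, a t * v t g := by
      rw [hrec g, ← this]
    rw [hxdef]
    simp only [hsum, ha1, hv1' g]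
    ring
  -- ℓ² norm of the deviation
  have hsq : ∑ g : G, x g ^ 2 = N * ∑ t ∈ Finset.univ.erase 1, a t ^ 2 := by
    have e1 : ∑ g : G, x g ^ 2
        = ∑ g : G, ∑ s ∈ Finset.univ.erase 1, ∑ t ∈ Finset.univ.erase 1,
            (a s * a t) * (v s g * v t g) :=
      Finset.sum_congr rfl fun g _ => by
        rw [hx g, sq, Finset.sum_mul_sum]
        exact Finset.sum_congr rfl fun s _ => Finset.sum_congr rfl fun t _ => by ring
    rw [e1, Finset.sum_comm]
    have e2 : ∀ s ∈ Finset.univ.erase (1 : G),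
        (∑ g : G, ∑ t ∈ Finset.univ.erase 1, (a s * a t) * (v s g * v t g))
          = N * a s ^ 2 := by
      intro s _
      rw [Finset.sum_comm]
      have e3 : ∀ t ∈ Finset.univ.erase (1 : G),
          (∑ g : G, (a s * a t) * (v s g * v t g))
            = (a s * a t) * if s = t then N else 0 := by
        intro t _
        rw [← horth' s t, Finset.mul_sum]
      rw [Finset.sum_congr rfl e3]
      rename_i hs
      rw [Finset.sum_eq_single_of_mem s hs]
      · rw [if_pos rfl]; ring
      · intro b _ hb
        rw [if_neg (fun h => hb h.symm), mul_zero]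
    calc ∑ s ∈ Finset.univ.erase (1 : G), ∑ g : G, ∑ t ∈ Finset.univ.erase 1,
            (a s * a t) * (v s g * v t g)
        = ∑ s ∈ Finset.univ.erase (1 : G), N * a s ^ 2 := Finset.sum_congr rfl e2
      _ = N * ∑ t ∈ Finset.univ.erase 1, a t ^ 2 := by rw [Finset.mul_sum]
  -- bound the ℓ² norm
  have hvsum : ∑ t ∈ Finset.univ.erase (1 : G), v t 1 ^ 2 = N - 1 := by
    have h11 : ∑ t : G, v t 1 * v t 1 = N := by rw [hcomp 1 1]; simp
    have h2 : ∑ t : G, v t 1 ^ 2 = N := by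
      rw [← h11]; exact Finset.sum_congr rfl fun t _ => by ring
    have h3 := Finset.add_sum_erase Finset.univ (fun t => v t 1 ^ 2) (Finset.mem_univ (1 : G))
    rw [hv1' 1, one_pow] at h3
    linarith
  have hsqle : ∑ g : G, x g ^ 2 ≤ lamStar ^ (2 * k) * (N - 1) / N := by
    rw [hsq]
    have hterm : ∀ t ∈ Finset.univ.erase (1 : G),
        a t ^ 2 ≤ lamStar ^ (2 * k) * v t 1 ^ 2 / N ^ 2 := by
      intro t ht
      have ht1 : t ≠ 1 := Finset.ne_of_mem_erase ht
      have hlt : lam t ^ 2 ≤ lamStar ^ 2 := by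
        rw [← sq_abs (lam t)]
        exact pow_le_pow_left₀ (abs_nonneg _) (hbound t ht1) 2
      have hlk : (lam t ^ k) ^ 2 ≤ lamStar ^ (2 * k) := by
        rw [← pow_mul, mul_comm k 2, pow_mul, pow_mul]
        exact pow_le_pow_left₀ (sq_nonneg _) hlt k
      have : a t ^ 2 = (lam t ^ k) ^ 2 * v t 1 ^ 2 / N ^ 2 := by
        simp only [hadef]; ring
      rw [this]
      have hnum : (lam t ^ k) ^ 2 * v t 1 ^ 2 ≤ lamStar ^ (2 * k) * v t 1 ^ 2 :=
        mul_le_mul_of_nonneg_right hlk (sq_nonneg _)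
      exact div_le_div_of_nonneg_right hnum (by positivity) |>.trans_eq rfl
    calc N * ∑ t ∈ Finset.univ.erase 1, a t ^ 2
        ≤ N * ∑ t ∈ Finset.univ.erase 1, lamStar ^ (2 * k) * v t 1 ^ 2 / N ^ 2 :=
          mul_le_mul_of_nonneg_left (Finset.sum_le_sum hterm) (le_of_lt hN)
      _ = lamStar ^ (2 * k) * (N - 1) / N := by
          rw [show (∑ t ∈ Finset.univ.erase (1:G), lamStar ^ (2 * k) * v t 1 ^ 2 / N ^ 2)
              = lamStar ^ (2 * k) / N ^ 2 * ∑ t ∈ Finset.univ.erase (1:G), v t 1 ^ 2 from by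
            rw [Finset.mul_sum]; exact Finset.sum_congr rfl fun t _ => by ring]
          rw [hvsum]
          field_simp
  -- Cauchy–Schwarz and conclusion
  have hcs : (∑ g : G, |x g|) ^ 2 ≤ N * ∑ g : G, x g ^ 2 := by
    have := Finset.sum_mul_sq_le_sq_mul_sq Finset.univ (fun _ : G => (1 : ℝ)) (fun g => |x g|)
    simp only [one_mul, one_pow, sq_abs] at this
    simpa [hNdef, Finset.card_univ] using this
  have htv : tv (convPow ν k) (unif G) = (1 / 2) * ∑ g : G, |x g| := by
    unfold tv unif
    congr 1
  have hxnn : 0 ≤ ∑ g : G, |x g| := Finset.sum_nonneg fun g _ => abs_nonneg _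
  rw [htv]
  have : ((1 / 2) * ∑ g : G, |x g|) ^ 2 = (1 / 4) * (∑ g : G, |x g|) ^ 2 := by ring
  rw [this]
  calc (1 / 4) * (∑ g : G, |x g|) ^ 2
      ≤ (1 / 4) * (N * ∑ g : G, x g ^ 2) := by linarith
    _ ≤ (1 / 4) * (N * (lamStar ^ (2 * k) * (N - 1) / N)) := by
        have := mul_le_mul_of_nonneg_left hsqle (le_of_lt hN)
        linarith
    _ = (N - 1) / 4 * lamStar ^ (2 * k) := by field_simp
end

section
/- Let G be a finite group, ν a probability measure on G, λ a real number with λ ≠ 1, and u : G → ℝ a left eigenvector of the stochastic operator with eigenvalue λ, i.e., ∑_{t∈G} u(t) ν(s t⁻¹) = λ u(s) for all s ∈ G. Suppose u is normalised so that π + u is a probability measure (i.e., 1/|G| + u(s) ≥ 0 for all s). Then for every k ∈ ℕ, ‖ν^{⋆k} − π‖ ≥ (1/2) (∑_{s∈G} |u(s)|) · |λ|^k. -/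
open Finset

lemma sum_mulRightInv {G : Type*} [Group G] [Fintype G] (f : G → ℝ) (t : G) :
    ∑ s : G, f (s * t⁻¹) = ∑ s : G, f s :=
  Equiv.sum_comp (Equiv.mulRight t⁻¹) f

lemma sum_mulLeftInv {G : Type*} [Group G] [Fintype G] (f : G → ℝ) (s : G) :
    ∑ t : G, f (s * t⁻¹) = ∑ t : G, f t :=
  Equiv.sum_comp ((Equiv.inv G).trans (Equiv.mulLeft s)) f

/-- eigenvector lower bound on the variation distance. -/
theorem tv_ge_eigenvector_lower_bound
    {G : Type*} [Group G] [Fintype G] [DecidableEq G]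
    (ν : G → ℝ) (hν : IsProb ν)
    (lam : ℝ) (hlam : lam ≠ 1) (u : G → ℝ)
    (heig : ∀ s : G, ∑ t : G, u t * ν (s * t⁻¹) = lam * u s)
    (hnorm : ∀ s : G, 0 ≤ 1 / (Fintype.card G : ℝ) + u s)
    (k : ℕ) :
    (1 / 2) * (∑ s : G, |u s|) * |lam| ^ k ≤ tv (convPow ν k) (unif G) := by
  obtain ⟨hν0, hν1⟩ := hν
  have hcard : (0:ℝ) < (Fintype.card G : ℝ) := by exact_mod_cast Fintype.card_pos
  have hrow : ∀ s : G, ∑ t : G, ν (s * t⁻¹) = 1 := by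
    intro s; rw [sum_mulLeftInv ν s, hν1]
  have hsumu : ∑ s : G, u s = 0 := by
    have h1 : ∑ s : G, ∑ t : G, u t * ν (s * t⁻¹) = lam * ∑ s, u s := by
      simp_rw [heig]; rw [← Finset.mul_sum]
    rw [Finset.sum_comm] at h1
    have h2 : ∀ t : G, ∑ s : G, u t * ν (s * t⁻¹) = u t := by
      intro t
      rw [← Finset.mul_sum, sum_mulRightInv ν t, hν1, mul_one]
    simp_rw [h2] at h1
    have h3 : (1 - lam) * ∑ x : G, u x = 0 := by linear_combination h1
    rcases mul_eq_zero.mp h3 with h | h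
    · exact absurd (by linarith [sub_eq_zero.mp h] : lam = 1) hlam
    · exact h
  have hsumw : ∑ t : G, (unif G t + u t) = 1 := by
    rw [Finset.sum_add_distrib, hsumu, add_zero]
    simp [unif, Finset.sum_const, hcard.ne']
  have key : ∀ k : ℕ, ∀ s : G,
      ∑ t : G, convPow ν k (s * t⁻¹) * (unif G t + u t)
        = unif G s + lam ^ k * u s := by
    intro k
    induction k with
    | zero =>
      intro s
      have hcond : ∀ t : G, (s * t⁻¹ = 1) ↔ (t = s) := by
        intro t; rw [mul_inv_eq_one]; exact eq_comm
      simp only [convPow]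
      rw [Finset.sum_congr rfl (fun t _ => by rw [if_congr (hcond t) rfl rfl])]
      simp only [ite_mul, one_mul, zero_mul]
      rw [Finset.sum_ite_eq' Finset.univ s (fun t => unif G t + u t)]
      simp [unif]
    | succ k ih =>
      intro s
      have step : ∑ t : G, convPow ν (k+1) (s * t⁻¹) * (unif G t + u t)
          = ∑ q : G, ν (s * q⁻¹) * (∑ t : G, convPow ν k (q * t⁻¹) * (unif G t + u t)) := by
        simp only [convPow, conv, Finset.sum_mul]
        have hx : ∀ x : G, ∑ r : G, ν (s * x⁻¹ * r⁻¹) * convPow ν k r * (unif G x + u x)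
            = ∑ q : G, ν (s * q⁻¹) * (convPow ν k (q * x⁻¹) * (unif G x + u x)) := by
          intro x
          rw [← Equiv.sum_comp (Equiv.mulRight x⁻¹)
              (fun r => ν (s * x⁻¹ * r⁻¹) * convPow ν k r * (unif G x + u x))]
          refine Finset.sum_congr rfl fun q _ => ?_
          simp only [Equiv.coe_mulRight]
          have harg : s * x⁻¹ * (q * x⁻¹)⁻¹ = s * q⁻¹ := by group
          rw [harg, mul_assoc]
        simp_rw [hx]
        rw [Finset.sum_comm]
        simp_rw [← Finset.mul_sum]
      rw [step]
      simp_rw [ih]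
      have hexp : ∀ q : G, ν (s * q⁻¹) * (unif G q + lam ^ k * u q)
          = unif G s * ν (s * q⁻¹) + lam ^ k * (u q * ν (s * q⁻¹)) := by
        intro q; simp only [unif]; ring
      rw [Finset.sum_congr rfl fun q _ => hexp q, Finset.sum_add_distrib,
        ← Finset.mul_sum, ← Finset.mul_sum, hrow s, heig s, mul_one]
      ring
  have hbound : ∀ s : G, |lam ^ k * u s|
      ≤ ∑ t : G, |convPow ν k (s * t⁻¹) - unif G (s * t⁻¹)| * (unif G t + u t) := by
    intro s
    have h1 : ∑ t : G, unif G (s * t⁻¹) * (unif G t + u t) = unif G s := by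
      simp only [unif]
      rw [← Finset.mul_sum]
      have := hsumw
      simp only [unif] at this
      rw [this, mul_one]
    have hid : lam ^ k * u s
        = ∑ t : G, (convPow ν k (s * t⁻¹) - unif G (s * t⁻¹)) * (unif G t + u t) := by
      simp_rw [sub_mul]
      rw [Finset.sum_sub_distrib, key k s, h1]; ring
    rw [hid]
    refine le_trans (Finset.abs_sum_le_sum_abs _ _) (le_of_eq ?_)
    refine Finset.sum_congr rfl fun t _ => ?_
    rw [abs_mul]
    congr 1
    exact abs_of_nonneg (hnorm t)
  have hfin : |lam| ^ k * ∑ s : G, |u s|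
      ≤ ∑ g : G, |convPow ν k g - unif G g| := by
    calc |lam| ^ k * ∑ s : G, |u s| = ∑ s : G, |lam ^ k * u s| := by
          rw [Finset.mul_sum]
          exact Finset.sum_congr rfl fun s _ => by rw [abs_mul, abs_pow]
      _ ≤ ∑ s : G, ∑ t : G, |convPow ν k (s * t⁻¹) - unif G (s * t⁻¹)| * (unif G t + u t) :=
          Finset.sum_le_sum fun s _ => hbound s
      _ = ∑ t : G, (unif G t + u t) * ∑ g : G, |convPow ν k g - unif G g| := by
          rw [Finset.sum_comm]
          refine Finset.sum_congr rfl fun t _ => ?_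
          rw [← Finset.sum_mul,
            sum_mulRightInv (fun g => |convPow ν k g - unif G g|) t, mul_comm]
      _ = ∑ g : G, |convPow ν k g - unif G g| := by
          rw [← Finset.sum_mul, hsumw, one_mul]
  have : tv (convPow ν k) (unif G) = (1/2) * ∑ g : G, |convPow ν k g - unif G g| := rfl
  rw [this]
  nlinarith [hfin]
end

section
/- For every real x with 0 ≤ x ≤ π/6, cos x ≥ e^{−x²/2 − x⁴/2}. -/
/-!
Put `a = x²/2 + x⁴/2`. Since `1 + a ≤ eᵃ`, it suffices that `cos x · (1 + a) ≥ 1`. Replacing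
`cos x` by its Taylor lower bound `1 - x²/2 - 5x⁴/96` turns this into a polynomial inequality in
`t = x²`, in which the `t²` terms have a positive coefficient and dominate for small `t`.
-/

open Real

lemma one_sub_sq_div_two_sub_le_cos {x : ℝ} (hx : |x| ≤ 1) :
    1 - x ^ 2 / 2 - 5 / 96 * x ^ 4 ≤ cos x := by
  have h := (abs_le.mp (cos_bound hx)).1
  rw [pow_abs, abs_of_nonneg (by positivity : (0 : ℝ) ≤ x ^ 4)] at h
  linarith

lemma exp_neg_mul_one_add_le_one (a : ℝ) : exp (-a) * (1 + a) ≤ 1 := by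
  calc exp (-a) * (1 + a) ≤ exp (-a) * exp a := by gcongr; linarith [add_one_le_exp a]
    _ = 1 := by rw [← exp_add, neg_add_cancel, exp_zero]

/-- The product expands to `1 + t² (19/96 - 53t/192 - 5t²/192)`. -/
lemma one_le_cos_lower_bound_mul {t : ℝ} (ht₀ : 0 ≤ t) (ht : t ≤ 1 / 2) :
    1 ≤ (1 - t / 2 - 5 / 96 * t ^ 2) * (1 + (t / 2 + t ^ 2 / 2)) := by
  nlinarith [mul_nonneg (sq_nonneg t) (sub_nonneg.mpr ht), sq_nonneg t, pow_nonneg ht₀ 3]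

/-- for `0 ≤ x ≤ π/6`, `cos x ≥ e^{−x²/2 − x⁴/2}`. -/
theorem exp_le_cos_of_le_pi_div_six (x : ℝ) (h0 : 0 ≤ x) (h1 : x ≤ Real.pi / 6) :
    Real.exp (-(x ^ 2) / 2 - x ^ 4 / 2) ≤ Real.cos x := by
  have hx : x ≤ 2 / 3 := by linarith [pi_le_four]
  have hsq : x ^ 2 ≤ 1 / 2 := by nlinarith
  have hp : 0 ≤ 1 - x ^ 2 / 2 - 5 / 96 * x ^ 4 := by nlinarith
  set a := x ^ 2 / 2 + x ^ 4 / 2 with ha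
  set p := 1 - x ^ 2 / 2 - 5 / 96 * x ^ 4
  have hcos : p ≤ cos x := one_sub_sq_div_two_sub_le_cos (by rw [abs_of_nonneg h0]; linarith)
  have hpoly : 1 ≤ p * (1 + a) := by
    simpa only [← pow_mul, Nat.reduceMul] using one_le_cos_lower_bound_mul (sq_nonneg x) hsq
  calc exp (-(x ^ 2) / 2 - x ^ 4 / 2) = exp (-a) := by rw [ha]; ring_nf
    _ ≤ exp (-a) * (p * (1 + a)) := le_mul_of_one_le_right (exp_pos _).le hpoly
    _ = exp (-a) * (1 + a) * p := by ring
    _ ≤ p := mul_le_of_le_one_left hp (exp_neg_mul_one_add_le_one a)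
    _ ≤ cos x := hcos
end

section
/- Let G be a finite group and ν a symmetric probability measure on G. If ν^{⋆k} = π for some k ≥ 1, then ν = π: the uniform distribution is never reached in finitely many steps by a non-uniform symmetric walk. -/
open Finset
set_option linter.unusedSectionVars false
set_option linter.unusedVariables false

section Aux
variable {G : Type*} [Group G] [Fintype G] [DecidableEq G]

lemma myshift (ν : G → ℝ) (t : G) : ∑ s, ν (s * t⁻¹) = ∑ s, ν s :=
  Fintype.sum_equiv (Equiv.mulRight t⁻¹) _ _ (fun s => rfl)

lemma sum_conv (ν f : G → ℝ) (h1 : ∑ s, ν s = 1) : ∑ s, conv ν f s = ∑ s, f s := by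
  simp only [conv]
  rw [Finset.sum_comm]
  refine Finset.sum_congr rfl fun t _ => ?_
  rw [← Finset.sum_mul, myshift, h1, one_mul]

lemma adj (ν : G → ℝ) (hsym : ∀ s : G, ν s = ν s⁻¹) (f g : G → ℝ) :
    ∑ s, conv ν f s * g s = ∑ s, f s * conv ν g s := by
  simp only [conv, Finset.sum_mul, Finset.mul_sum]
  rw [Finset.sum_comm]
  refine Finset.sum_congr rfl fun s _ => Finset.sum_congr rfl fun t _ => ?_
  have : ν (t * s⁻¹) = ν (s * t⁻¹) := by rw [hsym (t * s⁻¹)]; simp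
  rw [this]; ring

lemma myshift2 (ν : G → ℝ) (s : G) : ∑ t, ν (s * t⁻¹) = ∑ t, ν t := by
  refine Fintype.sum_bijective (fun t => s * t⁻¹) ?_ _ _ (fun t => rfl)
  exact (Equiv.trans (Equiv.inv G) (Equiv.mulLeft s)).bijective

lemma conv_assoc (μ ν f : G → ℝ) : conv (conv μ ν) f = conv μ (conv ν f) := by
  funext s
  show ∑ t, (∑ u, μ (s * t⁻¹ * u⁻¹) * ν u) * f t
      = ∑ u, μ (s * u⁻¹) * ∑ t, ν (u * t⁻¹) * f t
  simp only [Finset.sum_mul, Finset.mul_sum]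
  nth_rewrite 2 [Finset.sum_comm]
  refine Finset.sum_congr rfl fun t _ => ?_
  refine Fintype.sum_bijective (fun u => u * t) (Equiv.mulRight t).bijective _ _
    fun u => ?_
  simp only [mul_inv_rev]
  rw [show s * (t⁻¹ * u⁻¹) = s * t⁻¹ * u⁻¹ by group,
    show u * t * t⁻¹ = u by group]
  ring

lemma conv_delta (ν : G → ℝ) :
    conv ν (fun s => if s = 1 then 1 else 0) = ν := by
  funext s
  simp only [conv, mul_ite, mul_one, mul_zero]
  rw [Finset.sum_ite_eq' univ (1 : G)]
  simp

lemma conv_unif (ν : G → ℝ) (h1 : ∑ s, ν s = 1) : conv ν (unif G) = unif G := by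
  funext s
  simp only [conv, unif]
  rw [← Finset.sum_mul, myshift2, h1, one_mul]

lemma conv_sub (ν f g : G → ℝ) : conv ν (f - g) = conv ν f - conv ν g := by
  funext s
  simp [conv, mul_sub, Finset.sum_sub_distrib]

lemma convPow_conv (ν f : G → ℝ) (k : ℕ) :
    conv (convPow ν k) f = (conv ν)^[k] f := by
  induction k with
  | zero =>
      funext s
      simp only [convPow, conv, Function.iterate_zero, id]
      have : ∀ t : G, (if s * t⁻¹ = 1 then (1:ℝ) else 0) * f t
          = (if t = s then (1:ℝ) else 0) * f t := by
        intro t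
        congr 1
        simp [mul_inv_eq_one, eq_comm]
      rw [Finset.sum_congr rfl fun t _ => this t]
      simp [Finset.sum_ite_eq' univ s]
  | succ k ih =>
      show conv (conv ν (convPow ν k)) f = _
      rw [conv_assoc, ih]
      exact (Function.iterate_succ_apply' (conv ν) k f).symm

lemma adj_iter (ν : G → ℝ) (hsym : ∀ s : G, ν s = ν s⁻¹) (a : ℕ) (f g : G → ℝ) :
    ∑ s, (conv ν)^[a] f s * g s = ∑ s, f s * (conv ν)^[a] g s := by
  induction a generalizing f g with
  | zero => simp
  | succ a ih =>
      rw [Function.iterate_succ_apply]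
      rw [ih (conv ν f) g, adj ν hsym f ((conv ν)^[a] g),
        ← Function.iterate_succ_apply' (conv ν) a g, Function.iterate_succ_apply]

lemma iter_zero (ν : G → ℝ) (m : ℕ) : (conv ν)^[m] (0 : G → ℝ) = 0 := by
  induction m with
  | zero => rfl
  | succ m ih =>
      rw [Function.iterate_succ_apply]
      have : conv ν (0 : G → ℝ) = 0 := by funext s; simp [conv]
      rw [this, ih]

lemma descend (ν : G → ℝ) (hsym : ∀ s : G, ν s = ν s⁻¹) (m : ℕ)
    (H : ∀ f : G → ℝ, ∑ s, f s = 0 → (conv ν)^[m + 2] f = 0) :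
    ∀ f : G → ℝ, ∑ s, f s = 0 → (conv ν)^[m + 1] f = 0 := by
  intro f hf
  have h2 : (conv ν)^[(m + 1) + (m + 1)] f = 0 := by
    have : (m + 1) + (m + 1) = m + (m + 2) := by ring
    rw [this, Function.iterate_add_apply, H f hf, iter_zero]
  have hsq : ∑ s, (conv ν)^[m + 1] f s * (conv ν)^[m + 1] f s = 0 := by
    rw [adj_iter ν hsym (m + 1) f ((conv ν)^[m + 1] f),
      ← Function.iterate_add_apply, h2]
    simp
  funext s
  have hnn : ∀ t ∈ Finset.univ, 0 ≤ (conv ν)^[m + 1] f t * (conv ν)^[m + 1] f t :=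
    fun t _ => mul_self_nonneg _
  have := (Finset.sum_eq_zero_iff_of_nonneg hnn).mp hsq s (Finset.mem_univ s)
  have := mul_self_eq_zero.mp this
  simp [this]

end Aux

theorem convPow_eq_unif_imp_eq_unif'
    {G : Type*} [Group G] [Fintype G] [DecidableEq G]
    (ν : G → ℝ) (h1 : ∑ s, ν s = 1) (hsym : ∀ s : G, ν s = ν s⁻¹)
    (k : ℕ) (hk : 1 ≤ k) (h : convPow ν k = unif G) :
    ν = unif G := by
  have hQk : ∀ f : G → ℝ, ∑ s, f s = 0 → (conv ν)^[k] f = 0 := by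
    intro f hf
    rw [← convPow_conv, h]
    funext s
    simp [conv, unif, ← Finset.mul_sum, hf]
  have key : ∀ m, (∀ f : G → ℝ, ∑ s, f s = 0 → (conv ν)^[m + 1] f = 0) →
      ∀ f : G → ℝ, ∑ s, f s = 0 → conv ν f = 0 := by
    intro m
    induction m with
    | zero => intro H f hf; simpa using H f hf
    | succ m ih => intro H; exact ih (descend ν hsym m H)
  have hk' : k - 1 + 1 = k := Nat.succ_pred_eq_of_pos hk
  have hQ1 : ∀ f : G → ℝ, ∑ s, f s = 0 → conv ν f = 0 :=
    key (k - 1) (by rw [hk']; exact hQk)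
  have hcard : (Fintype.card G : ℝ) ≠ 0 := Nat.cast_ne_zero.mpr Fintype.card_ne_zero
  set f : G → ℝ := (fun s => if s = 1 then 1 else 0) - unif G with hfdef
  have hf : ∑ s, f s = 0 := by
    rw [hfdef]
    simp only [Pi.sub_apply, Finset.sum_sub_distrib]
    rw [Finset.sum_ite_eq' Finset.univ (1 : G) (fun _ => (1:ℝ))]
    simp [unif, mul_one_div, div_self hcard]
  have := hQ1 f hf
  rw [hfdef, conv_sub, conv_delta, conv_unif ν h1, sub_eq_zero] at this
  exact this

/-- a symmetric walk reaches the uniform distribution in finitely many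
steps only if it is already uniform. -/
theorem convPow_eq_unif_imp_eq_unif
    {G : Type*} [Group G] [Fintype G] [DecidableEq G]
    (ν : G → ℝ) (hν : IsProb ν) (hsym : ∀ s : G, ν s = ν s⁻¹)
    (k : ℕ) (hk : 1 ≤ k) (h : convPow ν k = unif G) :
    ν = unif G := by
  exact convPow_eq_unif_imp_eq_unif' ν hν.2 hsym k hk h
end
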